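/- arXiv:2007.15035 — 8 statements merged into one kernel-verified Lean document; each statement's English description precedes it below -/
import Mathlib

section
/- Fix positive integers d, D, d_W with d_W ≥ 1. Let W : Fin d_W → Fin d_W → Matrix (Fin d) (Fin d) ℂ be lower triangular ((W a b) = 0 whenever a < b) with W 0 0 = 1 (the d×d identity matrix), and let A : Fin d → Matrix (Fin D) (Fin D) ℂ be left-canonical (∑_s (A s)ᴴ * (A s) = 1). Then I₁ ▷ E_A^W = I₁, i.e. for all α', a', β': ∑_{α,a,β,s,s'} I₁ α a β * (A s) α α' * ((W a a') s s') * conj ((A s') β β') = I₁ α' a' β'. -/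
open Matrix

/-- Paper's Appendix B claim: for a Schur-form (lower-triangular) MPO tensor `W` with
`W 0 0 = 1` and a left-canonical MPS tensor `A`, the boundary tensor
`I₁ α a β = δ_{a0} δ_{αβ}` is a left eigenvector with eigenvalue one of the MPO transfer
matrix `E_A^{[W]}`. -/
theorem I1_left_fixed_point
    (d D dW : ℕ) (hd : 0 < d) (hD : 0 < D)
    (W : Fin (dW + 1) → Fin (dW + 1) → Matrix (Fin d) (Fin d) ℂ)
    (hWtri : ∀ a b : Fin (dW + 1), a < b → W a b = 0)
    (hW00 : W 0 0 = 1)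
    (A : Fin d → Matrix (Fin D) (Fin D) ℂ)
    (hA : ∑ s : Fin d, (A s)ᴴ * A s = 1)
    (α' : Fin D) (a' : Fin (dW + 1)) (β' : Fin D) :
    ∑ α : Fin D, ∑ a : Fin (dW + 1), ∑ β : Fin D, ∑ s : Fin d, ∑ s' : Fin d,
        (if a = 0 ∧ α = β then (1 : ℂ) else 0) * (A s) α α' * (W a a') s s' *
          (starRingEnd ℂ) ((A s') β β')
      = (if a' = 0 ∧ α' = β' then 1 else 0) := by
  have key : ∀ x y : Fin D, (∑ s : Fin d, ∑ α : Fin D,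
      (starRingEnd ℂ) (A s α x) * A s α y) = if x = y then 1 else 0 := by
    intro x y
    have := congrFun (congrFun hA x) y
    simpa [Matrix.sum_apply, Matrix.mul_apply, Matrix.one_apply,
      Matrix.conjTranspose_apply] using this
  -- reduce LHS: if picks a = 0, β = α
  have step : (∑ α : Fin D, ∑ a : Fin (dW + 1), ∑ β : Fin D, ∑ s : Fin d, ∑ s' : Fin d,
        (if a = 0 ∧ α = β then (1 : ℂ) else 0) * (A s) α α' * (W a a') s s' *
          (starRingEnd ℂ) ((A s') β β'))
      = ∑ α : Fin D, ∑ s : Fin d, ∑ s' : Fin d,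
          (A s) α α' * (W 0 a') s s' * (starRingEnd ℂ) ((A s') α β') := by
    refine Finset.sum_congr rfl fun α _ => ?_
    rw [Finset.sum_eq_single 0]
    · rw [Finset.sum_eq_single α]
      · simp
      · intro β _ hβ; simp [Ne.symm hβ]
      · simp
    · intro a _ ha; simp [ha]
    · simp
  rw [step]
  rcases eq_or_ne a' 0 with rfl | ha'
  · rw [hW00]
    simp only [Matrix.one_apply, mul_ite, mul_one, mul_zero, ite_and]
    rw [Finset.sum_comm]
    simp only [ite_mul, zero_mul, Finset.sum_ite_eq, Finset.mem_univ, if_true]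
    rw [show (if α' = β' then (1:ℂ) else 0) = if β' = α' then 1 else 0 by simp [eq_comm],
      ← key β' α']
    exact Finset.sum_congr rfl fun α _ => Finset.sum_congr rfl fun s _ => mul_comm _ _
  · have h0 : (0 : Fin (dW+1)) < a' := by
      exact lt_of_le_of_ne (Fin.zero_le a') (Ne.symm ha')
    rw [hWtri 0 a' h0]
    simp [ha']
end

section
/- Fix positive integers d, D, d_W with d_W ≥ 1. Let W : Fin d_W → Fin d_W → Matrix (Fin d) (Fin d) ℂ be lower triangular ((W a b) = 0 whenever a < b) with W (Fin.last) (Fin.last) = 1 (the d×d identity matrix), and let A : Fin d → Matrix (Fin D) (Fin D) ℂ be right-canonical (∑_s (A s) * (A s)ᴴ = 1). Then E_A^W ◁ I_top = I_top, i.e. for all α, a, β: ∑_{α',a',β',s,s'} (A s) α α' * ((W a a') s s') * conj ((A s') β β') * I_top α' a' β' = I_top α a β. -/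
open Matrix

/-- Paper's Appendix B claim: for a Schur-form (lower-triangular) MPO tensor `W` with
`W last last = 1` and a right-canonical MPS tensor `A`, the boundary tensor
`I_top α a β = δ_{a,last} δ_{αβ}` is a right eigenvector with eigenvalue one of the MPO
transfer matrix `E_A^{[W]}`. -/
theorem Itop_right_fixed_point
    (d D dW : ℕ) (hd : 0 < d) (hD : 0 < D)
    (W : Fin (dW + 1) → Fin (dW + 1) → Matrix (Fin d) (Fin d) ℂ)
    (hWtri : ∀ a b : Fin (dW + 1), a < b → W a b = 0)
    (hWlast : W (Fin.last dW) (Fin.last dW) = 1)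
    (A : Fin d → Matrix (Fin D) (Fin D) ℂ)
    (hA : ∑ s : Fin d, A s * (A s)ᴴ = 1)
    (α : Fin D) (a : Fin (dW + 1)) (β : Fin D) :
    ∑ α' : Fin D, ∑ a' : Fin (dW + 1), ∑ β' : Fin D, ∑ s : Fin d, ∑ s' : Fin d,
        (A s) α α' * (W a a') s s' * (starRingEnd ℂ) ((A s') β β') *
          (if a' = Fin.last dW ∧ α' = β' then (1 : ℂ) else 0)
      = (if a = Fin.last dW ∧ α = β then 1 else 0) := by
  have h1 : ∀ α' : Fin D,
      (∑ a' : Fin (dW + 1), ∑ β' : Fin D, ∑ s : Fin d, ∑ s' : Fin d,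
        (A s) α α' * (W a a') s s' * (starRingEnd ℂ) ((A s') β β') *
          (if a' = Fin.last dW ∧ α' = β' then (1 : ℂ) else 0))
      = ∑ s : Fin d, ∑ s' : Fin d,
        (A s) α α' * (W a (Fin.last dW)) s s' * (starRingEnd ℂ) ((A s') β α') := by
    intro α'
    simp only [ite_and, mul_ite, mul_one, mul_zero]
    rw [Finset.sum_eq_single (Fin.last dW)]
    · simp
    · intro b _ hb; simp [hb]
    · simp
  simp only [h1]
  by_cases ha : a = Fin.last dW
  · subst ha
    simp only [hWlast, Matrix.one_apply, ite_mul, one_mul, mul_one, zero_mul, mul_ite, mul_zero]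
    have : ∀ α' : Fin D, (∑ s : Fin d, ∑ s' : Fin d,
        if s = s' then (A s) α α' * (starRingEnd ℂ) ((A s') β α') else 0)
        = ∑ s : Fin d, (A s) α α' * (starRingEnd ℂ) ((A s) β α') := by
      intro α'; apply Finset.sum_congr rfl; intro s _
      rw [Finset.sum_eq_single s] <;> simp +contextual [eq_comm]
    simp only [this]
    rw [Finset.sum_comm]
    have := congrArg (fun M => M α β) hA
    simp only [Matrix.sum_apply, Matrix.mul_apply, Matrix.one_apply, Matrix.conjTranspose_apply] at this
    simpa using this
  · have hlt : a < Fin.last dW := lt_of_le_of_ne (Fin.le_last a) ha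
    simp [hWtri a _ hlt, ha]
end

section
/- Fix positive integers d, D, D', d_W. Let W : Fin d_W → Fin d_W → Matrix (Fin d) (Fin d) ℂ be lower triangular ((W a b) = 0 whenever a < b) with W 0 0 = 1 (the d×d identity matrix). Let A_C : Fin d → Matrix (Fin D) (Fin D) ℂ and V : Fin d → Matrix (Fin D) (Fin D') ℂ satisfy ∑_s (V s)ᴴ * (A_C s) = 0. Then for all α' ∈ Fin D, a' ∈ Fin d_W, and κ ∈ Fin D': ∑_{α,a,β,s,s'} I₁ α a β * (A_C s) α α' * ((W a a') s s') * conj ((V s') β κ) = 0. -/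
open Matrix

/-- Paper's Lemma 1: `⟨I₁| E_C = 0`.  The boundary tensor `I₁ α a β = δ_{a0} δ_{αβ}`
annihilates from the left the column transfer tensor built from the center-site tensor
`A_C`, a Schur-form MPO tensor `W` (lower triangular with `W 0 0 = 1`), and the tensor
`V` whose columns are orthogonal to those of `A_C`. -/
theorem lemma1_I1_annihilates_EC
    (d D D' dW : ℕ) (hd : 0 < d) (hD : 0 < D) (hD' : 0 < D')
    (W : Fin (dW + 1) → Fin (dW + 1) → Matrix (Fin d) (Fin d) ℂ)
    (hWtri : ∀ a b : Fin (dW + 1), a < b → W a b = 0)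
    (hW00 : W 0 0 = 1)
    (A_C : Fin d → Matrix (Fin D) (Fin D) ℂ)
    (V : Fin d → Matrix (Fin D) (Fin D') ℂ)
    (hV : ∑ s : Fin d, (V s)ᴴ * A_C s = 0)
    (α' : Fin D) (a' : Fin (dW + 1)) (κ : Fin D') :
    ∑ α : Fin D, ∑ a : Fin (dW + 1), ∑ β : Fin D, ∑ s : Fin d, ∑ s' : Fin d,
        (if a = 0 ∧ α = β then (1 : ℂ) else 0) * (A_C s) α α' * (W a a') s s' *
          (starRingEnd ℂ) ((V s') β κ)
      = 0 := by
  classical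
  have step : (∑ α : Fin D, ∑ a : Fin (dW + 1), ∑ β : Fin D, ∑ s : Fin d, ∑ s' : Fin d,
        (if a = 0 ∧ α = β then (1 : ℂ) else 0) * (A_C s) α α' * (W a a') s s' *
          (starRingEnd ℂ) ((V s') β κ))
      = ∑ α : Fin D, ∑ s : Fin d, ∑ s' : Fin d,
          (A_C s) α α' * (W 0 a') s s' * (starRingEnd ℂ) ((V s') α κ) := by
    refine Finset.sum_congr rfl fun α _ => ?_
    rw [Finset.sum_eq_single 0]
    · rw [Finset.sum_eq_single α]
      · simp
      · intro β _ hβ; simp [Ne.symm hβ]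
      · simp
    · intro a _ ha; simp [ha]
    · simp
  rw [step]
  rcases eq_or_ne a' 0 with rfl | ha'
  · have hE : ∀ α (s s' : Fin d), (A_C s) α α' * (W 0 0) s s' * (starRingEnd ℂ) ((V s') α κ)
        = (if s' = s then (A_C s) α α' * (starRingEnd ℂ) ((V s') α κ) else 0) := by
      intro α s s'
      rw [hW00, Matrix.one_apply]
      by_cases h : s = s' <;> simp [h, eq_comm]
    simp only [hE, Finset.sum_ite_eq, Finset.sum_ite_eq', Finset.mem_univ, if_true]
    have hV' := congrFun (congrFun (congrArg (fun M => M) hV) κ) α'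
    have hV2 : ∑ s : Fin d, ∑ α : Fin D, (starRingEnd ℂ) ((V s) α κ) * (A_C s) α α' = 0 := by
      have := congrFun (congrFun hV κ) α'
      simpa [Matrix.sum_apply, Matrix.mul_apply, Matrix.conjTranspose_apply] using this
    rw [Finset.sum_comm]
    calc ∑ s : Fin d, ∑ α : Fin D, (A_C s) α α' * (starRingEnd ℂ) ((V s) α κ)
        = ∑ s : Fin d, ∑ α : Fin D, (starRingEnd ℂ) ((V s) α κ) * (A_C s) α α' := by
          simp [mul_comm]
      _ = 0 := hV2
  · have h0 : W 0 a' = 0 := hWtri 0 a' (Fin.pos_of_ne_zero ha')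
    simp [h0]
end

section
/- Fix positive integers d, D, D', d_W. Let W : Fin d_W → Fin d_W → Matrix (Fin d) (Fin d) ℂ be lower triangular ((W a b) = 0 whenever a < b) with W (Fin.last) (Fin.last) = 1 (the d×d identity matrix). Let L : Fin D → Fin d_W → Fin D → ℂ be a boundary tensor whose component at the last MPO index is the identity: L α (Fin.last) β = (if α = β then 1 else 0) for all α, β. Let A_C : Fin d → Matrix (Fin D) (Fin D) ℂ and V : Fin d → Matrix (Fin D) (Fin D') ℂ satisfy ∑_s (V s)ᴴ * (A_C s) = 0. Then for all α' ∈ Fin D and κ ∈ Fin D': ∑_{α,a,β,s,s'} L α a β * (A_C s) α α' * ((W a (Fin.last)) s s') * conj ((V s') β κ) = 0. -/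
open Matrix

/-- Paper's Lemma 4: `⟨L_A^{[W]}| E_C |I_top⟩ = 0`.  A boundary tensor `L` whose component
at the last MPO index is the identity, contracted with the column tensor built from the
center-site tensor `A_C`, a Schur-form MPO tensor `W` (lower triangular,
`W last last = 1`) at its last MPO column, and the tensor `V` orthogonal to `A_C`,
gives zero. -/
theorem lemma4_L_EC_Itop_eq_zero
    (d D D' dW : ℕ) (hd : 0 < d) (hD : 0 < D) (hD' : 0 < D')
    (W : Fin (dW + 1) → Fin (dW + 1) → Matrix (Fin d) (Fin d) ℂ)
    (hWtri : ∀ a b : Fin (dW + 1), a < b → W a b = 0)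
    (hWlast : W (Fin.last dW) (Fin.last dW) = 1)
    (L : Fin D → Fin (dW + 1) → Fin D → ℂ)
    (hL : ∀ α β : Fin D, L α (Fin.last dW) β = if α = β then 1 else 0)
    (A_C : Fin d → Matrix (Fin D) (Fin D) ℂ)
    (V : Fin d → Matrix (Fin D) (Fin D') ℂ)
    (hV : ∑ s : Fin d, (V s)ᴴ * A_C s = 0)
    (α' : Fin D) (κ : Fin D') :
    ∑ α : Fin D, ∑ a : Fin (dW + 1), ∑ β : Fin D, ∑ s : Fin d, ∑ s' : Fin d,
        L α a β * (A_C s) α α' * (W a (Fin.last dW)) s s' *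
          (starRingEnd ℂ) ((V s') β κ)
      = 0 := by
  have h0 : ∑ β : Fin D, ∑ s : Fin d,
      (A_C s) β α' * (starRingEnd ℂ) ((V s) β κ) = 0 := by
    have h' := congrFun (congrFun hV κ) α'
    simp only [Matrix.sum_apply, Matrix.mul_apply, Matrix.conjTranspose_apply,
      Matrix.zero_apply] at h'
    rw [Finset.sum_comm]
    calc ∑ s : Fin d, ∑ β : Fin D, (A_C s) β α' * (starRingEnd ℂ) ((V s) β κ)
        = ∑ s : Fin d, ∑ β : Fin D, star ((V s) β κ) * (A_C s) β α' := by
          simp [mul_comm]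
      _ = 0 := h'
  calc ∑ α : Fin D, ∑ a : Fin (dW + 1), ∑ β : Fin D, ∑ s : Fin d, ∑ s' : Fin d,
        L α a β * (A_C s) α α' * (W a (Fin.last dW)) s s' *
          (starRingEnd ℂ) ((V s') β κ)
      = ∑ α : Fin D, ∑ β : Fin D, ∑ s : Fin d, ∑ s' : Fin d,
        L α (Fin.last dW) β * (A_C s) α α' * ((W (Fin.last dW) (Fin.last dW)) s s') *
          (starRingEnd ℂ) ((V s') β κ) := by
        refine Finset.sum_congr rfl fun α _ => ?_
        refine Finset.sum_eq_single (Fin.last dW) (fun a _ ha => ?_) (by simp)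
        have : a < Fin.last dW := lt_of_le_of_ne (Fin.le_last a) ha
        simp [hWtri a (Fin.last dW) this]
    _ = 0 := by
        simp only [hWlast, hL, Matrix.one_apply]
        simp only [ite_mul, mul_ite, one_mul, zero_mul, mul_zero, mul_one,
          Finset.sum_ite_eq, Finset.sum_ite_eq', Finset.mem_univ, if_true]
        simpa using h0
end

section
/- Fix positive integers d, D, D', d_W and n ≥ 1. Let W, W₁, …, W_n : Fin d_W → Fin d_W → Matrix (Fin d) (Fin d) ℂ all be lower triangular ((W a b) = 0 whenever a < b) with W (Fin.last) (Fin.last) = 1 and (W_i) (Fin.last) (Fin.last) = 1 for every i. Let A_R, B¹, …, Bⁿ : Fin d → Matrix (Fin D) (Fin D) ℂ all be right-canonical (∑_s (X s) * (X s)ᴴ = 1). Let L : Fin D → Fin d_W → Fin D → ℂ satisfy L α (Fin.last) β = (if α = β then 1 else 0), and let A_C : Fin d → Matrix (Fin D) (Fin D) ℂ, V : Fin d → Matrix (Fin D) (Fin D') ℂ satisfy ∑_s (V s)ᴴ * (A_C s) = 0. For m ∈ ℕ define the boundary tensor R_m = (E_{A_R}^W ◁)^m (E_{B¹}^{W₁}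 ◁ (⋯ (E_{Bⁿ}^{W_n} ◁ I_top)⋯)). Then for every m ∈ ℕ and all α₀ ∈ Fin D, κ ∈ Fin D', γ ∈ Fin D: ∑_{α,a,β,s,s',α₁,a₁} L α a β * (A_C s) α α₁ * ((W a a₁) s s') * conj ((V s') β κ) * R_m α₁ a₁ γ = 0. -/
open Matrix

/-- Right action of the MPO transfer matrix `E_A^{[W]}` on a boundary tensor `R`. -/
noncomputable def mpoActR {d D dw : ℕ}
    (A : Fin d → Matrix (Fin D) (Fin D) ℂ)
    (W : Fin dw → Fin dw → Matrix (Fin d) (Fin d) ℂ)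
    (R : Fin D → Fin dw → Fin D → ℂ) : Fin D → Fin dw → Fin D → ℂ :=
  fun α a β =>
    ∑ α' : Fin D, ∑ a' : Fin dw, ∑ β' : Fin D, ∑ s : Fin d, ∑ s' : Fin d,
      (A s) α α' * (W a a') s s' * (starRingEnd ℂ) ((A s') β β') * R α' a' β'

/-- The boundary tensor `I_top α a β = δ_{a, last} δ_{αβ}`. -/
noncomputable def Itop (D dW : ℕ) : Fin D → Fin (dW + 1) → Fin D → ℂ :=
  fun α a β => if a = Fin.last dW ∧ α = β then 1 else 0

/-- `Itop` is a fixed point of the MPO transfer map for right-canonical `A` and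
lower-triangular `W` with `W last last = 1`. -/
lemma mpoActR_Itop {d D dW : ℕ}
    (A : Fin d → Matrix (Fin D) (Fin D) ℂ)
    (hA : ∑ s : Fin d, A s * (A s)ᴴ = 1)
    (W : Fin (dW + 1) → Fin (dW + 1) → Matrix (Fin d) (Fin d) ℂ)
    (hWtri : ∀ a b : Fin (dW + 1), a < b → W a b = 0)
    (hWlast : W (Fin.last dW) (Fin.last dW) = 1) :
    mpoActR A W (Itop D dW) = Itop D dW := by
  funext α a β
  simp only [mpoActR, Itop]
  by_cases ha : a = Fin.last dW
  · subst ha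
    have hrhs : (if Fin.last dW = Fin.last dW ∧ α = β then (1:ℂ) else 0)
        = if α = β then 1 else 0 := by simp
    rw [hrhs]
    have h1 : ∀ α' : Fin D,
        (∑ a' : Fin (dW+1), ∑ β' : Fin D, ∑ s : Fin d, ∑ s' : Fin d,
        (A s) α α' * (W (Fin.last dW) a') s s' * (starRingEnd ℂ) ((A s') β β')
          * (if a' = Fin.last dW ∧ α' = β' then 1 else 0))
        = ∑ s : Fin d, (A s) α α' * (starRingEnd ℂ) ((A s) β α') := by
      intro α'
      rw [Finset.sum_eq_single (Fin.last dW)]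
      · rw [Finset.sum_eq_single α']
        · simp [hWlast, Matrix.one_apply, Finset.sum_ite_eq, mul_ite, ite_mul]
        · intro b _ hb
          apply Finset.sum_eq_zero; intro s _
          apply Finset.sum_eq_zero; intro s' _
          rw [if_neg (by tauto)]; ring
        · simp
      · intro b _ hb
        apply Finset.sum_eq_zero; intro β' _
        apply Finset.sum_eq_zero; intro s _
        apply Finset.sum_eq_zero; intro s' _
        rw [if_neg (by tauto)]; ring
      · simp
    simp only [h1]
    rw [Finset.sum_comm]
    rw [show (if α = β then (1:ℂ) else 0) = (1 : Matrix (Fin D) (Fin D) ℂ) α β by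
      simp [Matrix.one_apply]]
    rw [← hA, Matrix.sum_apply]
    apply Finset.sum_congr rfl; intro s _
    simp [Matrix.mul_apply, Matrix.conjTranspose_apply]
  · rw [if_neg (by tauto)]
    apply Finset.sum_eq_zero; intro α' _
    apply Finset.sum_eq_zero; intro a' _
    apply Finset.sum_eq_zero; intro β' _
    apply Finset.sum_eq_zero; intro s _
    apply Finset.sum_eq_zero; intro s' _
    by_cases h' : a' = Fin.last dW
    · subst h'
      rw [hWtri a _ (Fin.lt_last_iff_ne_last.mpr ha)]
      simp
    · rw [if_neg (by tauto)]; ring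

/-- Paper's Lemma 2: `⟨L_A^{[W]}| E_C |I_top⟩ = 0`, where the column tensor built from
`(A_C, W, V̄)` is followed by `m` copies of the MPO transfer matrix of `A_R` and the MPO
transfer matrices of `B¹, …, Bⁿ`, terminated by `I_top`. -/
theorem lemma2_L_EC_Rm_eq_zero
    (d D D' dW n : ℕ) (hd : 0 < d) (hD : 0 < D) (hD' : 0 < D') (hn : 1 ≤ n)
    (W : Fin (dW + 1) → Fin (dW + 1) → Matrix (Fin d) (Fin d) ℂ)
    (Ws : Fin n → Fin (dW + 1) → Fin (dW + 1) → Matrix (Fin d) (Fin d) ℂ)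
    (hWtri : ∀ a b : Fin (dW + 1), a < b → W a b = 0)
    (hWstri : ∀ (i : Fin n) (a b : Fin (dW + 1)), a < b → Ws i a b = 0)
    (hWlast : W (Fin.last dW) (Fin.last dW) = 1)
    (hWslast : ∀ i : Fin n, Ws i (Fin.last dW) (Fin.last dW) = 1)
    (A_R : Fin d → Matrix (Fin D) (Fin D) ℂ)
    (hA_R : ∑ s : Fin d, A_R s * (A_R s)ᴴ = 1)
    (B : Fin n → Fin d → Matrix (Fin D) (Fin D) ℂ)
    (hB : ∀ i : Fin n, ∑ s : Fin d, B i s * (B i s)ᴴ = 1)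
    (L : Fin D → Fin (dW + 1) → Fin D → ℂ)
    (hL : ∀ α β : Fin D, L α (Fin.last dW) β = if α = β then 1 else 0)
    (A_C : Fin d → Matrix (Fin D) (Fin D) ℂ)
    (V : Fin d → Matrix (Fin D) (Fin D') ℂ)
    (hV : ∑ s : Fin d, (V s)ᴴ * A_C s = 0)
    (m : ℕ) (α₀ : Fin D) (κ : Fin D') (γ : Fin D) :
    let R_m : Fin D → Fin (dW + 1) → Fin D → ℂ :=
      (mpoActR A_R W)^[m]
        ((List.finRange n).foldr (fun i acc => mpoActR (B i) (Ws i) acc) (Itop D dW))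
    ∑ α : Fin D, ∑ a : Fin (dW + 1), ∑ β : Fin D, ∑ s : Fin d, ∑ s' : Fin d,
        ∑ α₁ : Fin D, ∑ a₁ : Fin (dW + 1),
        L α a β * (A_C s) α α₁ * (W a a₁) s s' * (starRingEnd ℂ) ((V s') β κ) *
          R_m α₁ a₁ γ
      = 0 := by
  intro R_m
  -- Step 1: R_m = Itop
  have hfold : ∀ l : List (Fin n),
      l.foldr (fun i acc => mpoActR (B i) (Ws i) acc) (Itop D dW) = Itop D dW := by
    intro l
    induction l with
    | nil => rfl
    | cons i t ih =>
        simp only [List.foldr_cons, ih, mpoActR_Itop (B i) (hB i) (Ws i) (hWstri i) (hWslast i)]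
  have hRm : R_m = Itop D dW := by
    show (mpoActR A_R W)^[m] _ = _
    rw [hfold]
    exact Function.iterate_fixed (mpoActR_Itop A_R hA_R W hWtri hWlast) m
  rw [hRm]
  -- Step 2: collapse the inner sums using Itop
  have h2 : ∀ (α : Fin D) (a : Fin (dW+1)) (β : Fin D) (s s' : Fin d),
      (∑ α₁ : Fin D, ∑ a₁ : Fin (dW + 1),
        L α a β * (A_C s) α α₁ * (W a a₁) s s' * (starRingEnd ℂ) ((V s') β κ) *
          Itop D dW α₁ a₁ γ)
      = L α a β * (A_C s) α γ * (W a (Fin.last dW)) s s' * (starRingEnd ℂ) ((V s') β κ) := by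
    intro α a β s s'
    rw [Finset.sum_eq_single γ]
    · rw [Finset.sum_eq_single (Fin.last dW)]
      · simp [Itop]
      · intro b _ hb
        simp only [Itop]
        rw [if_neg (by tauto)]; ring
      · simp
    · intro b _ hb
      apply Finset.sum_eq_zero; intro a₁ _
      simp only [Itop]
      rw [if_neg (by tauto)]; ring
    · simp
  simp only [h2]
  -- Step 3: collapse the a-sum using triangularity, then β via hL, then s' via hWlast
  have h3 : ∀ α : Fin D,
      (∑ a : Fin (dW+1), ∑ β : Fin D, ∑ s : Fin d, ∑ s' : Fin d,
        L α a β * (A_C s) α γ * (W a (Fin.last dW)) s s' * (starRingEnd ℂ) ((V s') β κ))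
      = ∑ s : Fin d, (A_C s) α γ * (starRingEnd ℂ) ((V s) α κ) := by
    intro α
    rw [Finset.sum_eq_single (Fin.last dW)]
    · rw [Finset.sum_eq_single α]
      · simp [hL, hWlast, Matrix.one_apply, mul_ite, ite_mul, Finset.sum_ite_eq]
      · intro b _ hb
        apply Finset.sum_eq_zero; intro s _
        apply Finset.sum_eq_zero; intro s' _
        rw [hL]
        rw [if_neg (by tauto)]; ring
      · simp
    · intro a _ ha
      rw [hWtri a _ (Fin.lt_last_iff_ne_last.mpr ha)]
      simp
    · simp
  simp only [h3]
  rw [Finset.sum_comm]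
  have h4 : ∑ s : Fin d, ∑ α : Fin D,
      (starRingEnd ℂ) ((V s) α κ) * (A_C s) α γ = 0 := by
    have h := congrFun (congrFun hV κ) γ
    simpa [Matrix.sum_apply, Matrix.mul_apply, Matrix.conjTranspose_apply] using h
  rw [← h4]
  apply Finset.sum_congr rfl; intro s _
  apply Finset.sum_congr rfl; intro α _
  ring
end

section
/- Fix positive integers d, D and d_W ≥ 2, and n ≥ 1. Let W₁, …, W_n : Fin d_W → Fin d_W → Matrix (Fin d) (Fin d) ℂ all be lower triangular ((W a b) = 0 whenever a < b) with (W_i) 0 0 = 1 for every i. Let B¹, …, B^{n−1} : Fin d → Matrix (Fin D) (Fin D) ℂ be left-canonical (∑_s (X s)ᴴ * (X s) = 1) and let B_C : Fin d → Matrix (Fin D) (Fin D) ℂ be arbitrary. Define L' = I₁ ▷ E_{B¹}^{W₁} ▷ ⋯ ▷ E_{B^{n−1}}^{W_{n−1}}. Then for all β ∈ Fin D, s' ∈ Fin d, γ ∈ Fin D: ∑_{α,a,α',a',s} L' α a β * (B_C s) α α' * ((W_n a a') s s') * I_top α' a' γ = 0. -/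
/-!
If `W` is lower triangular with `W 0 0 = 1` and `A` is left-canonical, then `I₁` is a left fixed
point of the transfer matrix `E_A^W`: contracting with `I₁` leaves `∑ s s', W 0 a' s s' • (A s'ᴴ A s)`,
which vanishes for `a' ≠ 0` and equals `∑ s, A sᴴ A s = 1` for `a' = 0`. Hence `L' = I₁`, and the
final contraction only sees the entry `W_n 0 last`, which vanishes because `0 < last`.
-/

open Matrix

/-- Left action of the MPO transfer matrix `E_A^{[W]}` on a boundary tensor `L`. -/
noncomputable def mpoActL {d D dw : ℕ}
    (A : Fin d → Matrix (Fin D) (Fin D) ℂ)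
    (W : Fin dw → Fin dw → Matrix (Fin d) (Fin d) ℂ)
    (L : Fin D → Fin dw → Fin D → ℂ) : Fin D → Fin dw → Fin D → ℂ :=
  fun α' a' β' =>
    ∑ α : Fin D, ∑ a : Fin dw, ∑ β : Fin D, ∑ s : Fin d, ∑ s' : Fin d,
      L α a β * (A s) α α' * (W a a') s s' * (starRingEnd ℂ) ((A s') β β')

/-- The boundary tensor `I₁ α a β = δ_{a,0} δ_{αβ}`. -/
noncomputable def Ione (D dw : ℕ) [NeZero dw] : Fin D → Fin dw → Fin D → ℂ :=
  fun α a β => if a = 0 ∧ α = β then 1 else 0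

lemma mpoActL_Ione_apply {d D dw : ℕ} [NeZero dw]
    (A : Fin d → Matrix (Fin D) (Fin D) ℂ) (W : Fin dw → Fin dw → Matrix (Fin d) (Fin d) ℂ)
    (α' : Fin D) (a' : Fin dw) (β' : Fin D) :
    mpoActL A W (Ione D dw) α' a' β' = ∑ s, ∑ s', W 0 a' s s' * ((A s')ᴴ * A s) β' α' := by
  simp only [mpoActL, Ione, ite_mul, one_mul, zero_mul, Finset.sum_ite_irrel,
    Finset.sum_const_zero, Finset.sum_ite_eq, Finset.sum_ite_eq', Finset.mem_univ, if_true, ite_and]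
  simp only [Matrix.mul_apply, Matrix.conjTranspose_apply, Finset.mul_sum, RCLike.star_def]
  rw [Finset.sum_comm]
  refine Finset.sum_congr rfl fun s _ => ?_
  rw [Finset.sum_comm]
  refine Finset.sum_congr rfl fun s' _ => Finset.sum_congr rfl fun α _ => ?_
  ring

lemma mpoActL_Ione {d D dw : ℕ} [NeZero dw]
    (A : Fin d → Matrix (Fin D) (Fin D) ℂ) (W : Fin dw → Fin dw → Matrix (Fin d) (Fin d) ℂ)
    (hW : ∀ a b, a < b → W a b = 0) (hW00 : W 0 0 = 1) (hA : ∑ s, (A s)ᴴ * A s = 1) :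
    mpoActL A W (Ione D dw) = Ione D dw := by
  funext α' a' β'
  rw [mpoActL_Ione_apply]
  rcases eq_or_ne a' 0 with rfl | ha'
  · simp only [hW00, Matrix.one_apply, ite_mul, one_mul, zero_mul, Finset.sum_ite_eq,
      Finset.mem_univ, if_true]
    rw [← Matrix.sum_apply, hA, Matrix.one_apply]
    simp [Ione, eq_comm]
  · simp [hW 0 a' (pos_of_ne_zero ha'), Ione, ha']

lemma foldl_mpoActL_Ione {ι : Type*} {d D dw : ℕ} [NeZero dw]
    (B : ι → Fin d → Matrix (Fin D) (Fin D) ℂ)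
    (Ws : ι → Fin dw → Fin dw → Matrix (Fin d) (Fin d) ℂ)
    (hWs : ∀ i a b, a < b → Ws i a b = 0) (hWs00 : ∀ i, Ws i 0 0 = 1)
    (hB : ∀ i, ∑ s, (B i s)ᴴ * B i s = 1) (l : List ι) :
    l.foldl (fun acc i => mpoActL (B i) (Ws i) acc) (Ione D dw) = Ione D dw := by
  induction l with
  | nil => rfl
  | cons i l ih => rw [List.foldl_cons, mpoActL_Ione (B i) (Ws i) (hWs i) (hWs00 i) (hB i), ih]

/-- The MPO bond dimension is `dW + 2 ≥ 2`, and `m = n − 1` is the number of left-canonical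
tensors, so that `n = m + 1 ≥ 1`. -/
theorem lemma6_I1_ED_Itop_eq_zero_general
    (d D dW m : ℕ)
    (Ws : Fin m → Fin (dW + 2) → Fin (dW + 2) → Matrix (Fin d) (Fin d) ℂ)
    (Wn : Fin (dW + 2) → Fin (dW + 2) → Matrix (Fin d) (Fin d) ℂ)
    (hWstri : ∀ (i : Fin m) (a b : Fin (dW + 2)), a < b → Ws i a b = 0)
    (hWntri : ∀ a b : Fin (dW + 2), a < b → Wn a b = 0)
    (hWs00 : ∀ i : Fin m, Ws i 0 0 = 1)
    (B : Fin m → Fin d → Matrix (Fin D) (Fin D) ℂ)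
    (hB : ∀ i : Fin m, ∑ s : Fin d, (B i s)ᴴ * B i s = 1)
    (B_C : Fin d → Matrix (Fin D) (Fin D) ℂ)
    (β : Fin D) (s' : Fin d) (γ : Fin D) :
    let L' : Fin D → Fin (dW + 2) → Fin D → ℂ :=
      (List.finRange m).foldl (fun acc i => mpoActL (B i) (Ws i) acc) (Ione D (dW + 2))
    ∑ α : Fin D, ∑ a : Fin (dW + 2), ∑ α' : Fin D, ∑ a' : Fin (dW + 2), ∑ s : Fin d,
        L' α a β * (B_C s) α α' * (Wn a a') s s' * Itop D (dW + 1) α' a' γ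
      = 0 := by
  intro L'
  have hL' : L' = Ione D (dW + 2) := foldl_mpoActL_Ione B Ws hWstri hWs00 hB _
  have hWn_top : Wn 0 (Fin.last (dW + 1)) = 0 := hWntri 0 _ Fin.last_pos
  refine Finset.sum_eq_zero fun α _ => Finset.sum_eq_zero fun a _ => Finset.sum_eq_zero
    fun α' _ => Finset.sum_eq_zero fun a' _ => Finset.sum_eq_zero fun s _ => ?_
  rw [hL', Ione, Itop]
  split_ifs with h₁ h₂
  · rw [h₁.1, h₂.1, hWn_top]; simp
  all_goals simp

/-- Paper's Lemma 6: `⟨I₁| E_D |I_top⟩ = 0`, where `E_D` consists of the MPO transfer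
matrices of the left-canonical tensors `B¹, …, B^{n−1}` followed by the column tensor
built from the center-site tensor `B_C` and `W_n` with an open physical leg.
Here the MPO bond dimension is `dW + 2 ≥ 2`, and `m = n − 1` is the number of
left-canonical tensors, so that `n = m + 1 ≥ 1`. -/
theorem lemma6_I1_ED_Itop_eq_zero
    (d D dW m : ℕ) (hd : 0 < d) (hD : 0 < D)
    (Ws : Fin m → Fin (dW + 2) → Fin (dW + 2) → Matrix (Fin d) (Fin d) ℂ)
    (Wn : Fin (dW + 2) → Fin (dW + 2) → Matrix (Fin d) (Fin d) ℂ)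
    (hWstri : ∀ (i : Fin m) (a b : Fin (dW + 2)), a < b → Ws i a b = 0)
    (hWntri : ∀ a b : Fin (dW + 2), a < b → Wn a b = 0)
    (hWs00 : ∀ i : Fin m, Ws i 0 0 = 1)
    (hWn00 : Wn 0 0 = 1)
    (B : Fin m → Fin d → Matrix (Fin D) (Fin D) ℂ)
    (hB : ∀ i : Fin m, ∑ s : Fin d, (B i s)ᴴ * B i s = 1)
    (B_C : Fin d → Matrix (Fin D) (Fin D) ℂ)
    (β : Fin D) (s' : Fin d) (γ : Fin D) :
    let L' : Fin D → Fin (dW + 2) → Fin D → ℂ :=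
      (List.finRange m).foldl (fun acc i => mpoActL (B i) (Ws i) acc) (Ione D (dW + 2))
    ∑ α : Fin D, ∑ a : Fin (dW + 2), ∑ α' : Fin D, ∑ a' : Fin (dW + 2), ∑ s : Fin d,
        L' α a β * (B_C s) α α' * (Wn a a') s s' * Itop D (dW + 1) α' a' γ
      = 0 :=
  lemma6_I1_ED_Itop_eq_zero_general d D dW m Ws Wn hWstri hWntri hWs00 B hB B_C β s' γ
end

section
/- Fix positive integers d, D, d_W and n ≥ 1. Let W₁, …, W_n : Fin d_W → Fin d_W → Matrix (Fin d) (Fin d) ℂ all be lower triangular ((W a b) = 0 whenever a < b) with (W_i) 0 0 = 1 and (W_i) (Fin.last) (Fin.last) = 1 for every i. Let B¹, …, B^{n−1} : Fin d → Matrix (Fin D) (Fin D) ℂ be left-canonical (∑_s (X s)ᴴ * (X s) = 1) and B_C : Fin d → Matrix (Fin D) (Fin D) ℂ arbitrary. Then: (i) with L' = I₁ ▷ E_{B¹}^{W₁} ▷ ⋯ ▷ E_{B^{n−1}}^{W_{n−1}} and any boundary tensor R satisfying R α 0 β = (if α = β then 1 else 0), one has, for all β, s', γ: ∑_{α,a,α',a',s}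 L' α a β * (B_C s) α α' * ((W_n a a') s s') * R α' a' γ = (B_C s') β γ; and (ii) with L any boundary tensor satisfying L α (Fin.last) β = (if α = β then 1 else 0) and L'' = L ▷ E_{B¹}^{W₁} ▷ ⋯ ▷ E_{B^{n−1}}^{W_{n−1}}, one has, for all β, s', γ: ∑_{α,a,α',a',s} L'' α a β * (B_C s) α α' * ((W_n a a') s s') * I_top α' a' γ = (B_C s') β γ. -/
open Matrix

lemma canon_sum {d D : ℕ} (A : Fin d → Matrix (Fin D) (Fin D) ℂ)
    (hA : ∑ s : Fin d, (A s)ᴴ * A s = 1) (α' β' : Fin D) :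
    ∑ α : Fin D, ∑ s : Fin d, A s α α' * (starRingEnd ℂ) (A s α β') =
      if α' = β' then 1 else 0 := by
  have h := congrArg (fun M => M β' α') hA
  simp only [Matrix.sum_apply, Matrix.mul_apply, Matrix.conjTranspose_apply,
    Matrix.one_apply] at h
  rw [Finset.sum_comm] at h
  rw [show (if α' = β' then (1:ℂ) else 0) = (if β' = α' then 1 else 0) by
    by_cases hh : α' = β' <;> simp [hh, Ne.symm, eq_comm]]
  rw [← h]
  exact Finset.sum_congr rfl fun α _ => Finset.sum_congr rfl fun s _ => by
    rw [starRingEnd_apply]; ring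

lemma ione_inv {d D dw : ℕ} (A : Fin d → Matrix (Fin D) (Fin D) ℂ)
    (W : Fin (dw+1) → Fin (dw+1) → Matrix (Fin d) (Fin d) ℂ)
    (htri : ∀ a b, a < b → W a b = 0) (h00 : W 0 0 = 1)
    (hA : ∑ s : Fin d, (A s)ᴴ * A s = 1) :
    mpoActL A W (Ione D (dw+1)) = Ione D (dw+1) := by
  funext α' a' β'
  simp only [mpoActL, Ione, ite_and, ite_mul, zero_mul, one_mul,
    Finset.sum_ite_irrel, Finset.sum_const_zero, Finset.sum_ite_eq,
    Finset.sum_ite_eq', Finset.mem_univ, if_true]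
  by_cases ha : a' = 0
  · subst ha
    simp only [if_true, h00, Matrix.one_apply, mul_ite, ite_mul, mul_zero, zero_mul, mul_one,
      Finset.sum_ite_eq, Finset.mem_univ, if_true]
    exact canon_sum A hA α' β'
  · simp [ha, htri 0 a' (Fin.pos_of_ne_zero ha)]

lemma last_inv {d D dw : ℕ} (A : Fin d → Matrix (Fin D) (Fin D) ℂ)
    (W : Fin (dw+1) → Fin (dw+1) → Matrix (Fin d) (Fin d) ℂ)
    (htri : ∀ a b, a < b → W a b = 0) (hlast : W (Fin.last dw) (Fin.last dw) = 1)
    (hA : ∑ s : Fin d, (A s)ᴴ * A s = 1)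
    (X : Fin D → Fin (dw+1) → Fin D → ℂ)
    (hX : ∀ α β, X α (Fin.last dw) β = if α = β then 1 else 0) :
    ∀ α' β', (mpoActL A W X) α' (Fin.last dw) β' = if α' = β' then 1 else 0 := by
  intro α' β'
  simp only [mpoActL]
  have key : ∀ α : Fin D,
      (∑ a : Fin (dw+1), ∑ β : Fin D, ∑ s : Fin d, ∑ s' : Fin d,
        X α a β * A s α α' * W a (Fin.last dw) s s' * (starRingEnd ℂ) (A s' β β'))
      = ∑ β : Fin D, ∑ s : Fin d, ∑ s' : Fin d,
        X α (Fin.last dw) β * A s α α' * W (Fin.last dw) (Fin.last dw) s s' *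
          (starRingEnd ℂ) (A s' β β') := fun α =>
    Finset.sum_eq_single (Fin.last dw)
      (fun b _ hb => by
        simp [htri b (Fin.last dw) (lt_of_le_of_ne (Fin.le_last b) hb)])
      (fun h => absurd (Finset.mem_univ _) h)
  rw [Finset.sum_congr rfl fun α _ => key α]
  simp only [hX, hlast, Matrix.one_apply, ite_mul, mul_ite, zero_mul, mul_zero, one_mul,
    mul_one, Finset.sum_ite_irrel, Finset.sum_const_zero, Finset.sum_ite_eq,
    Finset.sum_ite_eq', Finset.mem_univ, if_true]
  exact canon_sum A hA α' β'

lemma foldl_pres {σ ι : Type*} (f : σ → ι → σ) (P : σ → Prop)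
    (hf : ∀ x i, P x → P (f x i)) : ∀ (l : List ι) (x : σ), P x → P (l.foldl f x)
  | [], _, h => h
  | i :: l, x, h => foldl_pres f P hf l (f x i) (hf x i h)

/-- Paper's Lemma 7: `⟨I₁| E_D |R_Z^{[W]}⟩ = ⟨L_A^{[W]}| E_D |I_top⟩ = B_C^n`, where
`E_D` consists of the MPO transfer matrices of the left-canonical tensors
`B¹, …, B^{n−1}` followed by the column tensor built from the center-site tensor `B_C`
and `W_n`, with an open physical leg.  Here `m = n − 1` is the number of left-canonical
tensors, so that `n = m + 1 ≥ 1`. -/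
theorem lemma7_ED_contraction_eq_BC
    (d D dW m : ℕ) (hd : 0 < d) (hD : 0 < D)
    (Ws : Fin m → Fin (dW + 1) → Fin (dW + 1) → Matrix (Fin d) (Fin d) ℂ)
    (Wn : Fin (dW + 1) → Fin (dW + 1) → Matrix (Fin d) (Fin d) ℂ)
    (hWstri : ∀ (i : Fin m) (a b : Fin (dW + 1)), a < b → Ws i a b = 0)
    (hWntri : ∀ a b : Fin (dW + 1), a < b → Wn a b = 0)
    (hWs00 : ∀ i : Fin m, Ws i 0 0 = 1)
    (hWn00 : Wn 0 0 = 1)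
    (hWslast : ∀ i : Fin m, Ws i (Fin.last dW) (Fin.last dW) = 1)
    (hWnlast : Wn (Fin.last dW) (Fin.last dW) = 1)
    (B : Fin m → Fin d → Matrix (Fin D) (Fin D) ℂ)
    (hB : ∀ i : Fin m, ∑ s : Fin d, (B i s)ᴴ * B i s = 1)
    (B_C : Fin d → Matrix (Fin D) (Fin D) ℂ)
    (R : Fin D → Fin (dW + 1) → Fin D → ℂ)
    (hR : ∀ α β : Fin D, R α 0 β = if α = β then 1 else 0)
    (L : Fin D → Fin (dW + 1) → Fin D → ℂ)
    (hL : ∀ α β : Fin D, L α (Fin.last dW) β = if α = β then 1 else 0) :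
    (∀ (β : Fin D) (s' : Fin d) (γ : Fin D),
      ∑ α : Fin D, ∑ a : Fin (dW + 1), ∑ α' : Fin D, ∑ a' : Fin (dW + 1), ∑ s : Fin d,
          ((List.finRange m).foldl (fun acc i => mpoActL (B i) (Ws i) acc)
              (Ione D (dW + 1))) α a β *
            (B_C s) α α' * (Wn a a') s s' * R α' a' γ
        = (B_C s') β γ) ∧
    (∀ (β : Fin D) (s' : Fin d) (γ : Fin D),
      ∑ α : Fin D, ∑ a : Fin (dW + 1), ∑ α' : Fin D, ∑ a' : Fin (dW + 1), ∑ s : Fin d,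
          ((List.finRange m).foldl (fun acc i => mpoActL (B i) (Ws i) acc) L) α a β *
            (B_C s) α α' * (Wn a a') s s' * Itop D dW α' a' γ
        = (B_C s') β γ) := by
  constructor
  · intro β s' γ
    have hfix : (List.finRange m).foldl (fun acc i => mpoActL (B i) (Ws i) acc)
        (Ione D (dW + 1)) = Ione D (dW + 1) :=
      foldl_pres _ (fun X => X = Ione D (dW + 1))
        (fun X i hXi => by rw [hXi]; exact ione_inv (B i) (Ws i) (hWstri i) (hWs00 i) (hB i))
        (List.finRange m) _ rfl
    rw [hfix]
    simp only [Ione, ite_and, ite_mul, zero_mul, one_mul,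
      Finset.sum_ite_irrel, Finset.sum_const_zero, Finset.sum_ite_eq,
      Finset.sum_ite_eq', Finset.mem_univ, if_true]
    have key : ∀ α' : Fin D,
        (∑ a' : Fin (dW + 1), ∑ s : Fin d, B_C s β α' * Wn 0 a' s s' * R α' a' γ)
        = ∑ s : Fin d, B_C s β α' * Wn 0 0 s s' * R α' 0 γ := fun α' =>
      Finset.sum_eq_single 0
        (fun b _ hb => by simp [hWntri 0 b (Fin.pos_of_ne_zero hb)])
        (fun h => absurd (Finset.mem_univ _) h)
    rw [Finset.sum_congr rfl fun α' _ => key α']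
    simp [hWn00, Matrix.one_apply, hR, Finset.sum_ite_eq, Finset.sum_ite_eq']
  · intro β s' γ
    set L'' := (List.finRange m).foldl (fun acc i => mpoActL (B i) (Ws i) acc) L with hL''
    have hXinv : ∀ α β', L'' α (Fin.last dW) β' = if α = β' then 1 else 0 :=
      foldl_pres _ (fun X => ∀ α β', X α (Fin.last dW) β' = if α = β' then 1 else 0)
        (fun X i hXi => last_inv (B i) (Ws i) (hWstri i) (hWslast i) (hB i) X hXi)
        (List.finRange m) L hL
    simp only [Itop, ite_and, mul_ite, mul_zero, mul_one,
      Finset.sum_ite_irrel, Finset.sum_const_zero, Finset.sum_ite_eq,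
      Finset.sum_ite_eq', Finset.mem_univ, if_true]
    have key : ∀ α : Fin D,
        (∑ a : Fin (dW + 1), ∑ s : Fin d, L'' α a β * B_C s α γ * Wn a (Fin.last dW) s s')
        = ∑ s : Fin d, L'' α (Fin.last dW) β * B_C s α γ * Wn (Fin.last dW) (Fin.last dW) s s' :=
      fun α => Finset.sum_eq_single (Fin.last dW)
        (fun b _ hb => by
          simp [hWntri b (Fin.last dW) (lt_of_le_of_ne (Fin.le_last b) hb)])
        (fun h => absurd (Finset.mem_univ _) h)
    rw [Finset.sum_congr rfl fun α _ => key α]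
    simp [hXinv, hWnlast, Matrix.one_apply, Finset.sum_ite_eq, Finset.sum_ite_eq']
end

section
/- Let E be a finite-dimensional complex inner product space (inner product conjugate-linear in the first argument), T : E →ₗ[ℂ] E self-adjoint (⟪T x, y⟫ = ⟪x, T y⟫ for all x, y), and H : E → ℝ defined by H Ψ = Re ⟪Ψ, T Ψ⟫. Let K be a complex subspace of E and P the orthogonal projection of E onto K. Define ω : E → E → ℝ by ω x y = 2 * Im ⟪x, y⟫. Then for every Ψ ∈ E and every ξ ∈ K: fderiv ℝ H Ψ ξ = ω ((−Complex.I) • (P (T Ψ))) ξ. In other words, on the subspace K the Hamiltonian vector field of the restricted energy function is obtained by replacing ĤΨ with its orthogonal projection onto K: X_{H_M}(Ψ) = −i P(ĤΨ). -/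
/-! By self-adjointness of `T`, `dH_Ψ ξ = 2 Re ⟪T Ψ, ξ⟫`. For `ξ ∈ K` the component of `T Ψ`
orthogonal to `K` does not contribute, and `2 Re ⟪v, ξ⟫ = 2 Im ⟪-i v, ξ⟫ = ω (-i v) ξ`. -/

open scoped InnerProductSpace

theorem LinearMap.IsSymmetric.fderiv_re_inner_self_apply {𝕜 E : Type*} [RCLike 𝕜]
    [NormedAddCommGroup E] [InnerProductSpace 𝕜 E] [NormedSpace ℝ E] [IsScalarTower ℝ 𝕜 E]
    {T : E →L[𝕜] E} (hT : (T : E →ₗ[𝕜] E).IsSymmetric) (Ψ ξ : E) :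
    fderiv ℝ (fun x => RCLike.re ⟪x, T x⟫_𝕜) Ψ ξ = 2 * RCLike.re ⟪T Ψ, ξ⟫_𝕜 := by
  have hinner := (hasFDerivAt_id Ψ).inner 𝕜 (T.restrictScalars ℝ).hasFDerivAt
  have hre : HasFDerivAt (fun x => RCLike.re ⟪x, T x⟫_𝕜) _ Ψ :=
    RCLike.reCLM.hasFDerivAt.comp Ψ hinner
  rw [hre.fderiv]
  simp only [id_eq, ContinuousLinearMap.coe_restrictScalars', ContinuousLinearMap.comp_apply,
    ContinuousLinearMap.prod_apply, ContinuousLinearMap.id_apply, fderivInnerCLM_apply,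
    RCLike.reCLM_apply, map_add]
  rw [← inner_conj_symm ξ, RCLike.conj_re, ← ContinuousLinearMap.coe_coe T, ← hT Ψ ξ]
  ring

theorem Submodule.inner_orthogonalProjectionOnto_left_of_mem {𝕜 E : Type*} [RCLike 𝕜]
    [NormedAddCommGroup E] [InnerProductSpace 𝕜 E] (K : Submodule 𝕜 E) [K.HasOrthogonalProjection]
    (v : E) {ξ : E} (hξ : ξ ∈ K) :
    ⟪(K.orthogonalProjectionOnto v : E), ξ⟫_𝕜 = ⟪v, ξ⟫_𝕜 := by
  rw [← sub_eq_zero, ← inner_sub_left, ← neg_sub, inner_neg_left, neg_eq_zero]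
  exact K.starProjection_inner_eq_zero v ξ hξ

theorem Complex.im_inner_neg_I_smul_left {E : Type*} [NormedAddCommGroup E] [InnerProductSpace ℂ E]
    (v w : E) : (⟪-I • v, w⟫_ℂ).im = (⟪v, w⟫_ℂ).re := by
  simp [inner_smul_left]

/-- Appendix C, the key TDVP statement: on a complex subspace `K` (modeling the tangent
space of the variational manifold), the Hamiltonian vector field of the restricted energy
function is obtained by replacing `T Ψ` by its orthogonal projection onto `K`:
for every `ξ ∈ K`, `dH_Ψ(ξ) = ω(−i P(T Ψ), ξ)` with `ω x y = 2 Im ⟪x, y⟫`. -/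
theorem tdvp_projected_hamiltonian_flow
    {E : Type*} [NormedAddCommGroup E] [InnerProductSpace ℂ E] [FiniteDimensional ℂ E]
    (T : E →ₗ[ℂ] E) (hT : ∀ x y : E, ⟪T x, y⟫_ℂ = ⟪x, T y⟫_ℂ)
    (H : E → ℝ) (hH : ∀ Ψ : E, H Ψ = (⟪Ψ, T Ψ⟫_ℂ).re)
    (ω : E → E → ℝ) (hω : ∀ x y : E, ω x y = 2 * (⟪x, y⟫_ℂ).im)
    (K : Submodule ℂ E) :
    ∀ Ψ : E, ∀ ξ ∈ K,
      fderiv ℝ H Ψ ξ = ω ((-Complex.I) • ((Submodule.orthogonalProjectionOnto K (T Ψ) : K) : E)) ξ := by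
  intro Ψ ξ hξ
  have hTsymm : ((LinearMap.toContinuousLinearMap T : E →L[ℂ] E) : E →ₗ[ℂ] E).IsSymmetric := hT
  have hH' : H = fun x => RCLike.re ⟪x, LinearMap.toContinuousLinearMap T x⟫_ℂ := funext hH
  rw [hω, Complex.im_inner_neg_I_smul_left, K.inner_orthogonalProjectionOnto_left_of_mem _ hξ, hH',
    hTsymm.fderiv_re_inner_self_apply, LinearMap.coe_toContinuousLinearMap']
  rfl
end
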